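/- Let r and k be integers with r > |k| ≥ 1, and let ε be a real number with |ε| < 1. Then the function W̃(x) = (1/(2r·x^{(2r-1)/(2r)})) · e^{-x^{1/(2r)}} · [1 + ε·sin(kπ·(2r-1)/(2r) + x^{1/(2r)}·tan(kπ/(2r)))] is strictly positive on (0,∞) and satisfies ∫₀^∞ x^n · W̃(x) dx = (2rn)! for all natural numbers n. -/

import Mathlib

/-!
Substituting `x = t ^ (2r)` turns the `n`-th moment into
`∫ t ^ m e^{-t} (1 + ε sin (φ + t tan θ))` with `m = 2rn`, `θ = kπ/(2r)`, `φ = kπ(2r-1)/(2r)`.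
The first part is `Γ(m + 1) = m!`. The second is the imaginary part of
`e^{iφ} ∫ t ^ m e^{-(1 - i tan θ) t} dt = e^{iφ} m! (cos θ e^{iθ}) ^ (m + 1)`,
hence proportional to `sin (φ + (m + 1) θ) = sin (k (n + 1) π) = 0`;
`|k| < r` makes `cos θ ≠ 0`.
-/

open MeasureTheory Real Filter Set Topology
open scoped Complex

section LaplaceTransformOfPow

lemma integrableOn_pow_mul_exp_neg_mul_Ioi {b : ℝ} (hb : 0 < b) (m : ℕ) :
    IntegrableOn (fun t : ℝ => t ^ m * rexp (-(b * t))) (Ioi 0) := by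
  refine (integrableOn_rpow_mul_exp_neg_mul_rpow (s := m) (p := 1)
    (neg_one_lt_zero.trans_le m.cast_nonneg) one_pos hb).congr_fun (fun t _ => ?_) measurableSet_Ioi
  simp [rpow_natCast]

lemma norm_ofReal_pow_mul_cexp_neg_mul (z : ℂ) (m : ℕ) {t : ℝ} (ht : 0 ≤ t) :
    ‖(t : ℂ) ^ m * cexp (-(z * t))‖ = t ^ m * rexp (-(z.re * t)) := by
  simp [Complex.norm_exp, abs_of_nonneg ht]

variable {z : ℂ}

lemma integrableOn_ofReal_pow_mul_cexp_neg_mul_Ioi (hz : 0 < z.re) (m : ℕ) :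
    IntegrableOn (fun t : ℝ => (t : ℂ) ^ m * cexp (-(z * t))) (Ioi 0) := by
  refine (integrableOn_pow_mul_exp_neg_mul_Ioi hz m).mono' (by fun_prop) ?_
  filter_upwards [ae_restrict_mem measurableSet_Ioi] with t ht
  exact (norm_ofReal_pow_mul_cexp_neg_mul z m (le_of_lt ht)).le

lemma tendsto_ofReal_pow_mul_cexp_neg_mul_atTop (hz : 0 < z.re) (m : ℕ) :
    Tendsto (fun t : ℝ => (t : ℂ) ^ m * cexp (-(z * t))) atTop (𝓝 0) := by
  rw [tendsto_zero_iff_norm_tendsto_zero]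
  refine (tendsto_rpow_mul_exp_neg_mul_atTop_nhds_zero m z.re hz).congr' ?_
  filter_upwards [eventually_ge_atTop 0] with t ht
  rw [norm_ofReal_pow_mul_cexp_neg_mul z m ht, rpow_natCast, neg_mul]

lemma mul_integral_ofReal_pow_succ_mul_cexp_neg_mul_Ioi (hz : 0 < z.re) (m : ℕ) :
    z * ∫ t in Ioi (0 : ℝ), (t : ℂ) ^ (m + 1) * cexp (-(z * t))
      = (m + 1) * ∫ t in Ioi (0 : ℝ), (t : ℂ) ^ m * cexp (-(z * t)) := by
  have hderiv : ∀ t ∈ Ici (0 : ℝ), HasDerivAt (fun t : ℝ => (t : ℂ) ^ (m + 1) * cexp (-(z * t)))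
      ((m + 1) * ((t : ℂ) ^ m * cexp (-(z * t))) - z * ((t : ℂ) ^ (m + 1) * cexp (-(z * t)))) t := by
    intro t _
    have hpow := (hasDerivAt_pow (m + 1) (t : ℂ)).comp_ofReal
    have hexp := (((hasDerivAt_id t).ofReal_comp).const_mul z).neg.cexp
    exact (hpow.mul hexp).congr_deriv (by
      simp only [Nat.cast_add, Nat.cast_one, add_tsub_cancel_right, id_eq, Pi.neg_apply,
        Complex.ofReal_one, mul_one, mul_neg]
      ring)
  have hint := integrableOn_ofReal_pow_mul_cexp_neg_mul_Ioi hz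
  have hftc := integral_Ioi_of_hasDerivAt_of_tendsto' hderiv
    (((hint m).const_mul _).sub ((hint (m + 1)).const_mul _))
    (tendsto_ofReal_pow_mul_cexp_neg_mul_atTop hz (m + 1))
  rw [integral_sub ((hint m).const_mul _) ((hint (m + 1)).const_mul _), integral_const_mul,
    integral_const_mul] at hftc
  simp only [Complex.ofReal_zero, zero_pow (Nat.succ_ne_zero m), zero_mul, sub_zero] at hftc
  linear_combination -hftc

lemma integral_ofReal_pow_mul_cexp_neg_mul_Ioi (hz : 0 < z.re) (m : ℕ) :
    ∫ t in Ioi (0 : ℝ), (t : ℂ) ^ m * cexp (-(z * t)) = m.factorial / z ^ (m + 1) := by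
  have hz0 : z ≠ 0 := by rintro rfl; simp at hz
  induction m with
  | zero =>
    simpa [neg_mul] using integral_exp_mul_complex_Ioi (a := -z) (by simpa using hz) 0
  | succ m ih =>
    have h := mul_integral_ofReal_pow_succ_mul_cexp_neg_mul_Ioi hz m
    rw [ih] at h
    rw [Nat.factorial_succ, eq_div_iff (pow_ne_zero _ hz0)]
    field_simp at h
    push_cast
    linear_combination h

end LaplaceTransformOfPow

lemma integral_pow_mul_exp_neg_Ioi (m : ℕ) :
    ∫ t in Ioi (0 : ℝ), t ^ m * rexp (-t) = m.factorial := by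
  rw [← Real.Gamma_nat_eq_factorial, Real.Gamma_eq_integral (by positivity)]
  refine setIntegral_congr_fun measurableSet_Ioi (fun t _ => ?_)
  simp [mul_comm, ← rpow_natCast]

lemma inv_one_sub_tan_mul_I {θ : ℝ} (hθ : cos θ ≠ 0) :
    (1 - tan θ * Complex.I)⁻¹ = cos θ * cexp (θ * Complex.I) := by
  have hc : Complex.cos θ ≠ 0 := by exact_mod_cast hθ
  have h : (cos θ : ℂ) * (1 - tan θ * Complex.I) = cexp (-(θ * Complex.I)) := by
    rw [← neg_mul, Complex.exp_mul_I, Complex.cos_neg, Complex.sin_neg, ← Complex.ofReal_cos,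
      ← Complex.ofReal_sin, tan_eq_sin_div_cos]
    push_cast
    field_simp
    ring
  refine inv_eq_of_mul_eq_one_left ?_
  rw [mul_right_comm, h, ← Complex.exp_add, neg_add_cancel, Complex.exp_zero]

lemma integral_pow_mul_exp_neg_mul_sin_add_mul_tan (m : ℕ) (φ : ℝ) {θ : ℝ} (hθ : cos θ ≠ 0) :
    ∫ t in Ioi (0 : ℝ), t ^ m * rexp (-t) * sin (φ + t * tan θ)
      = m.factorial * cos θ ^ (m + 1) * sin (φ + (m + 1) * θ) := by
  set w : ℂ := 1 - tan θ * Complex.I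
  have hw : 0 < w.re := by simp [w]
  have hintegrand : ∀ t : ℝ, t ^ m * rexp (-t) * sin (φ + t * tan θ)
      = (cexp (φ * Complex.I) * ((t : ℂ) ^ m * cexp (-(w * t)))).im := by
    intro t
    have : cexp (φ * Complex.I) * ((t : ℂ) ^ m * cexp (-(w * t)))
        = ↑(t ^ m * rexp (-t)) * cexp (↑(φ + t * tan θ) * Complex.I) := calc
      _ = t ^ m * cexp (φ * Complex.I + -(w * t)) := by rw [Complex.exp_add]; ring
      _ = t ^ m * cexp (-t + ↑(φ + t * tan θ) * Complex.I) := by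
        congr 2; simp only [w]; push_cast; ring
      _ = _ := by rw [Complex.exp_add]; push_cast; ring
    rw [this, Complex.im_ofReal_mul, Complex.exp_ofReal_mul_I_im]
  have hvalue : cexp (φ * Complex.I) * (m.factorial / w ^ (m + 1))
      = ↑(m.factorial * cos θ ^ (m + 1)) * cexp (↑(φ + (m + 1) * θ) * Complex.I) := by
    have hangle : (↑(φ + (m + 1) * θ) : ℂ) * Complex.I
        = φ * Complex.I + ((m + 1 : ℕ) : ℂ) * (θ * Complex.I) := by push_cast; ring
    rw [div_eq_mul_inv, ← inv_pow, inv_one_sub_tan_mul_I hθ, mul_pow, ← Complex.exp_nat_mul,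
      hangle, Complex.exp_add]
    push_cast
    ring
  calc ∫ t in Ioi (0 : ℝ), t ^ m * rexp (-t) * sin (φ + t * tan θ)
      = (∫ t in Ioi (0 : ℝ), cexp (φ * Complex.I) * ((t : ℂ) ^ m * cexp (-(w * t)))).im := by
        simp_rw [hintegrand]
        exact integral_im ((integrableOn_ofReal_pow_mul_cexp_neg_mul_Ioi hw m).const_mul _)
    _ = _ := by
        rw [integral_const_mul, integral_ofReal_pow_mul_cexp_neg_mul_Ioi hw, hvalue,
          Complex.im_ofReal_mul, Complex.exp_ofReal_mul_I_im]

lemma integral_pow_mul_exp_neg_mul_one_add_mul_sin (m : ℕ) (ε φ : ℝ) {θ : ℝ} (hθ : cos θ ≠ 0) :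
    ∫ t in Ioi (0 : ℝ), t ^ m * rexp (-t) * (1 + ε * sin (φ + t * tan θ))
      = m.factorial * (1 + ε * cos θ ^ (m + 1) * sin (φ + (m + 1) * θ)) := by
  have hint : IntegrableOn (fun t : ℝ => t ^ m * rexp (-t)) (Ioi 0) := by
    simpa using integrableOn_pow_mul_exp_neg_mul_Ioi one_pos m
  have hint_sin : IntegrableOn (fun t : ℝ => t ^ m * rexp (-t) * sin (φ + t * tan θ)) (Ioi 0) :=
    hint.mul_bdd (by fun_prop) (ae_of_all _ fun t => abs_sin_le_one _)
  simp_rw [mul_one_add, ← mul_assoc, mul_comm _ ε, mul_assoc ε]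
  rw [integral_add hint (hint_sin.const_mul ε), integral_const_mul,
    integral_pow_mul_exp_neg_Ioi, integral_pow_mul_exp_neg_mul_sin_add_mul_tan m φ hθ]

lemma integral_comp_rpow_inv_Ioi {s : ℝ} (hs : 0 < s) (g : ℝ → ℝ) :
    ∫ x in Ioi (0 : ℝ), 1 / (s * x ^ ((s - 1) / s)) * g (x ^ (1 / s)) = ∫ t in Ioi (0 : ℝ), g t := by
  rw [← integral_comp_rpow_Ioi g (one_div_pos.mpr hs).ne']
  refine setIntegral_congr_fun measurableSet_Ioi (fun x hx => ?_)
  rw [smul_eq_mul, abs_of_pos (one_div_pos.mpr hs),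
    show 1 / s - 1 = -((s - 1) / s) by field_simp; ring, rpow_neg (le_of_lt hx)]
  field_simp

lemma one_add_mul_sin_pos {ε : ℝ} (hε : |ε| < 1) (y : ℝ) : 0 < 1 + ε * sin y := by
  have : |ε * sin y| < 1 := by
    rw [abs_mul]
    exact (mul_le_of_le_one_right (abs_nonneg ε) (abs_sin_le_one y)).trans_lt hε
  linarith [neg_abs_le (ε * sin y)]

theorem stmt_12_general (r : ℕ) (k : ℤ) (hrk : |k| < (r : ℤ))
    (ε : ℝ) (hε : |ε| < 1) :
    (∀ x : ℝ, 0 < x →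
      0 < 1 / (2 * (r : ℝ) * x ^ ((2 * (r : ℝ) - 1) / (2 * (r : ℝ)))) *
            Real.exp (-(x ^ (1 / (2 * (r : ℝ))))) *
            (1 + ε * Real.sin ((k : ℝ) * Real.pi * (2 * (r : ℝ) - 1) / (2 * (r : ℝ)) +
              x ^ (1 / (2 * (r : ℝ))) * Real.tan ((k : ℝ) * Real.pi / (2 * (r : ℝ)))))) ∧
    (∀ n : ℕ,
      ∫ x in Set.Ioi (0:ℝ),
        (x : ℝ) ^ n *
          (1 / (2 * (r : ℝ) * x ^ ((2 * (r : ℝ) - 1) / (2 * (r : ℝ)))) *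
            Real.exp (-(x ^ (1 / (2 * (r : ℝ))))) *
            (1 + ε * Real.sin ((k : ℝ) * Real.pi * (2 * (r : ℝ) - 1) / (2 * (r : ℝ)) +
              x ^ (1 / (2 * (r : ℝ))) * Real.tan ((k : ℝ) * Real.pi / (2 * (r : ℝ))))))
        = ((2 * r * n).factorial : ℝ)) := by
  have hr : 0 < r := by exact_mod_cast (abs_nonneg k).trans_lt hrk
  refine ⟨fun x hx => mul_pos (by positivity) (one_add_mul_sin_pos hε _), fun n => ?_⟩
  set θ : ℝ := k * π / (2 * r)
  set φ : ℝ := k * π * (2 * r - 1) / (2 * r)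
  have hθ : cos θ ≠ 0 := by
    have hk : |(k : ℝ)| < r := by rw [← Int.cast_abs]; exact_mod_cast hrk
    obtain ⟨hk₁, hk₂⟩ := abs_lt.mp hk
    refine (cos_pos_of_mem_Ioo ⟨?_, ?_⟩).ne'
    · rw [lt_div_iff₀ (by positivity)]; nlinarith [pi_pos]
    · rw [div_lt_iff₀ (by positivity)]; nlinarith [pi_pos]
  have hpow : ∀ x : ℝ, 0 < x → x ^ n = (x ^ (1 / (2 * (r : ℝ)))) ^ (2 * r * n) := by
    intro x hx
    rw [pow_mul, show 1 / (2 * (r : ℝ)) = ((2 * r : ℕ) : ℝ)⁻¹ by push_cast; rw [one_div],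
      rpow_inv_natCast_pow hx.le (by positivity)]
  have hangle : φ + ((2 * r * n : ℕ) + 1) * θ = (k * (n + 1) : ℤ) * π := by
    simp only [φ, θ]; push_cast; field_simp; ring
  set G : ℝ → ℝ := fun t => t ^ (2 * r * n) * rexp (-t) * (1 + ε * sin (φ + t * tan θ))
  refine (setIntegral_congr_fun measurableSet_Ioi fun x hx => ?_).trans
    ((integral_comp_rpow_inv_Ioi (s := 2 * r) (by positivity) G).trans ?_)
  · simp only [G]; rw [hpow x hx]; ring
  · rw [integral_pow_mul_exp_neg_mul_one_add_mul_sin _ _ _ hθ, hangle, sin_int_mul_pi]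
    simp

theorem stmt_12 (r : ℕ) (k : ℤ) (hk : 1 ≤ |k|) (hrk : |k| < (r : ℤ))
    (ε : ℝ) (hε : |ε| < 1) :
    (∀ x : ℝ, 0 < x →
      0 < 1 / (2 * (r : ℝ) * x ^ ((2 * (r : ℝ) - 1) / (2 * (r : ℝ)))) *
            Real.exp (-(x ^ (1 / (2 * (r : ℝ))))) *
            (1 + ε * Real.sin ((k : ℝ) * Real.pi * (2 * (r : ℝ) - 1) / (2 * (r : ℝ)) +
              x ^ (1 / (2 * (r : ℝ))) * Real.tan ((k : ℝ) * Real.pi / (2 * (r : ℝ)))))) ∧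
    (∀ n : ℕ,
      ∫ x in Set.Ioi (0:ℝ),
        (x : ℝ) ^ n *
          (1 / (2 * (r : ℝ) * x ^ ((2 * (r : ℝ) - 1) / (2 * (r : ℝ)))) *
            Real.exp (-(x ^ (1 / (2 * (r : ℝ))))) *
            (1 + ε * Real.sin ((k : ℝ) * Real.pi * (2 * (r : ℝ) - 1) / (2 * (r : ℝ)) +
              x ^ (1 / (2 * (r : ℝ))) * Real.tan ((k : ℝ) * Real.pi / (2 * (r : ℝ))))))
        = ((2 * r * n).factorial : ℝ)) :=
  stmt_12_general r k hrk ε hε
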